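/- Let σ : Γ → Aut(H) be an action such that (H ⋊_σ Γ, H) has relative property (T), and let β ∈ Aut(Γ). Then, with σ' = σ ∘ β and σ̃ the diagonal action σ̃(g) = σ(g) × σ'(g) on H × H, the pair ((H × H) ⋊_{σ̃} Γ, H × H) has relative property (T). -/

import Mathlib

/-- A pair `(G, N)` with `N` a subgroup of `G` has the *relative property (T)*
if there exist a finite set `F ⊆ G` and `δ > 0` such that every unitary
representation of `G` on a complex Hilbert space possessing an `(F,δ)`-almost
invariant unit vector has a nonzero `N`-invariant vector. -/
def RelPropertyT (G : Type*) [Group G] (N : Subgroup G) : Prop :=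
  ∃ (F : Finset G) (δ : ℝ), 0 < δ ∧
    ∀ (H : Type) (_ : NormedAddCommGroup H) (_ : InnerProductSpace ℂ H)
      (_ : CompleteSpace H) (π : G →* (H ≃ₗᵢ[ℂ] H)),
      (∃ ξ : H, ‖ξ‖ = 1 ∧ ∀ g ∈ F, ‖π g ξ - ξ‖ < δ) →
      ∃ ξ₀ : H, ξ₀ ≠ 0 ∧ ∀ h ∈ N, π h ξ₀ = ξ₀

/-!
Let `K` be the space of vectors fixed by `H × 1`. Since `H × 1` is normal, `K` and `Kᗮ` are
invariant, so the orthogonal projections onto them commute with the representation. Both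
`H × 1` and `1 × H` are images of `H ⋊[σ] Γ`, the second via `γ ↦ β⁻¹ γ`. Pulling back along
these embeddings, the projections of an almost invariant unit vector `ξ` stay almost
invariant. Relative (T) on `Kᗮ`, which has no nonzero `H × 1`-fixed vector, forces the
projection of `ξ` to `Kᗮ` to be short, so its projection to `K` is long; relative (T) on `K`
then yields a vector fixed by `1 × H`, which is also fixed by `H × 1` as it lies in `K`.
-/

namespace UnitaryRepresentation

variable {G : Type*} [Group G] {V : Type*} [NormedAddCommGroup V] [InnerProductSpace ℂ V]
  (π : G →* (V ≃ₗᵢ[ℂ] V))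

def stabilizer (v : V) : Subgroup G where
  carrier := {g | π g v = v}
  mul_mem' {a b} ha hb := by
    simp only [Set.mem_ofPred_eq, map_mul, LinearIsometryEquiv.coe_mul, Function.comp_apply] at *
    rw [hb, ha]
  one_mem' := by simp
  inv_mem' {a} ha := by
    simp only [Set.mem_ofPred_eq, map_inv, LinearIsometryEquiv.coe_inv] at *
    rw [LinearIsometryEquiv.symm_apply_eq, ha]

def fixedSubspace (N : Subgroup G) : Submodule ℂ V where
  carrier := {v | N ≤ stabilizer π v}
  add_mem' {v w} hv hw n hn := by
    change π n (v + w) = v + w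
    rw [map_add, hv hn, hw hn]
  zero_mem' n _ := map_zero (π n)
  smul_mem' c v hv n hn := by
    change π n (c • v) = c • v
    rw [map_smul, hv hn]

variable {π}

theorem mem_fixedSubspace {N : Subgroup G} {v : V} :
    v ∈ fixedSubspace π N ↔ ∀ n ∈ N, π n v = v := Iff.rfl

variable (π)

theorem fixedSubspace_sup (N₁ N₂ : Subgroup G) :
    fixedSubspace π (N₁ ⊔ N₂) = fixedSubspace π N₁ ⊓ fixedSubspace π N₂ :=
  SetLike.ext fun _ => sup_le_iff (a := N₁) (b := N₂)

theorem isClosed_fixedSubspace (N : Subgroup G) : IsClosed (fixedSubspace π N : Set V) := by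
  have : (fixedSubspace π N : Set V) = ⋂ n ∈ N, {v | π n v = v} := by
    ext v; simp [mem_fixedSubspace]
  rw [this]
  exact isClosed_biInter fun n _ => isClosed_eq (π n).continuous continuous_id

theorem fixedSubspace_invariant (N : Subgroup G) [N.Normal] :
    ∀ g, ∀ v ∈ fixedSubspace π N, π g v ∈ fixedSubspace π N := by
  intro g v hv n hn
  have hconj : g⁻¹ * n * g ∈ N := by simpa using ‹N.Normal›.conj_mem n hn g⁻¹
  calc π n (π g v) = π g (π (g⁻¹ * n * g) v) := by simp
    _ = π g v := by rw [hv hconj]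

section Invariant

variable {W : Submodule ℂ V} (hW : ∀ g, ∀ v ∈ W, π g v ∈ W)
include hW

theorem map_eq_of_invariant (g : G) :
    W.map ((π g).toLinearEquiv : V →ₗ[ℂ] V) = W := by
  refine le_antisymm (Submodule.map_le_iff_le_comap.2 fun v hv => hW g v hv) fun v hv => ?_
  refine ⟨π g⁻¹ v, hW g⁻¹ v hv, ?_⟩
  simp

theorem orthogonal_invariant : ∀ g, ∀ v ∈ Wᗮ, π g v ∈ Wᗮ := by
  intro g v hv
  rw [← map_eq_of_invariant π hW g, ← Submodule.map_orthogonal_equiv]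
  exact Submodule.mem_map_of_mem hv

theorem apply_starProjection [W.HasOrthogonalProjection] (g : G) (v : V) :
    π g (W.starProjection v) = W.starProjection (π g v) := by
  have := Submodule.starProjection_map_apply (π g) W (π g v)
  simp only [map_eq_of_invariant π hW g, LinearIsometryEquiv.symm_apply_apply] at this
  exact this.symm

theorem norm_starProjection_sub_le [W.HasOrthogonalProjection] (g : G) (v : V) :
    ‖π g (W.starProjection v) - W.starProjection v‖ ≤ ‖π g v - v‖ := by
  rw [apply_starProjection π hW, ← map_sub]
  exact W.norm_starProjection_apply_le _

def restrict : G →* (W ≃ₗᵢ[ℂ] W) where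
  toFun g :=
    { LinearEquiv.ofSubmodules (π g).toLinearEquiv W W (map_eq_of_invariant π hW g) with
      norm_map' := fun v => (π g).norm_map v }
  map_one' := by ext; simp
  map_mul' g h := by ext; simp only [map_mul]; rfl

end Invariant

end UnitaryRepresentation

section KazhdanPair

open UnitaryRepresentation

variable {G G' : Type*} [Group G] [Group G']

/-- The clause of `RelPropertyT` for a fixed `(F, δ)`, verbatim, so that the two unfold to
each other. -/
def IsKazhdanPair (N : Subgroup G) (F : Finset G) (δ : ℝ) : Prop :=
  ∀ (H : Type) (_ : NormedAddCommGroup H) (_ : InnerProductSpace ℂ H)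
    (_ : CompleteSpace H) (π : G →* (H ≃ₗᵢ[ℂ] H)),
    (∃ ξ : H, ‖ξ‖ = 1 ∧ ∀ g ∈ F, ‖π g ξ - ξ‖ < δ) →
    ∃ ξ₀ : H, ξ₀ ≠ 0 ∧ ∀ h ∈ N, π h ξ₀ = ξ₀

namespace IsKazhdanPair

variable {N : Subgroup G} {F : Finset G} {δ : ℝ}
  {V : Type} [NormedAddCommGroup V] [InnerProductSpace ℂ V]

theorem mono {N' : Subgroup G} (hT : IsKazhdanPair N F δ) (hN' : N' ≤ N) :
    IsKazhdanPair N' F δ := by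
  intro H _ _ _ π hξ
  obtain ⟨ξ₀, hξ₀, hfix⟩ := hT H ‹_› ‹_› ‹_› π hξ
  exact ⟨ξ₀, hξ₀, fun h hh => hfix h (hN' hh)⟩

theorem exists_fixed_of_norm_sub_lt [CompleteSpace V] (hT : IsKazhdanPair N F δ)
    (π : G →* (V ≃ₗᵢ[ℂ] V)) {v : V} (hv : v ≠ 0) (hF : ∀ g ∈ F, ‖π g v - v‖ < δ * ‖v‖) :
    ∃ ζ : V, ζ ≠ 0 ∧ ∀ n ∈ N, π n ζ = ζ := by
  have hv' : 0 < ‖v‖ := norm_pos_iff.2 hv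
  refine hT V ‹_› ‹_› ‹_› π ⟨(‖v‖⁻¹ : ℂ) • v, norm_smul_inv_norm hv, fun g hg => ?_⟩
  rw [map_smul, ← smul_sub, norm_smul, norm_inv, Complex.norm_real, norm_norm,
    inv_mul_lt_iff₀ hv', mul_comm]
  exact hF g hg

theorem exists_mem_fixedSubspace_of_starProjection [CompleteSpace V]
    (hT : IsKazhdanPair N F δ) (f : G →* G') (π : G' →* (V ≃ₗᵢ[ℂ] V))
    {W : Submodule ℂ V} [CompleteSpace W] (hW : ∀ g, ∀ v ∈ W, π g v ∈ W) {ξ : V}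
    (hξ : ∀ g ∈ F, ‖π (f g) ξ - ξ‖ < δ / 2) (hP : 1 / 2 ≤ ‖W.starProjection ξ‖) :
    ∃ ζ ∈ W, ζ ≠ 0 ∧ ζ ∈ fixedSubspace π (N.map f) := by
  have hP0 : W.starProjection ξ ≠ 0 := norm_pos_iff.1 (by linarith)
  obtain ⟨ζ, hζ, hfix⟩ := hT.exists_fixed_of_norm_sub_lt ((restrict π hW).comp f)
    (v := ⟨W.starProjection ξ, W.starProjection_apply_mem ξ⟩) (by simpa using hP0)
    fun g hg => by
      change ‖π (f g) (W.starProjection ξ) - W.starProjection ξ‖ < δ * ‖W.starProjection ξ‖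
      have := norm_starProjection_sub_le π hW (f g) ξ
      have := hξ g hg
      nlinarith [norm_nonneg (π (f g) ξ - ξ)]
  refine ⟨ζ, ζ.2, by simpa using hζ, ?_⟩
  rintro _ ⟨n, hn, rfl⟩
  exact congrArg Subtype.val (hfix n hn)

theorem map_sup_map [DecidableEq G'] (hT : IsKazhdanPair N F δ) (f₁ f₂ : G →* G')
    [(N.map f₁).Normal] :
    IsKazhdanPair (N.map f₁ ⊔ N.map f₂) (F.image f₁ ∪ F.image f₂) (δ / 2) := by
  rintro V _ _ _ π ⟨ξ, hξ, hF⟩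
  set K := fixedSubspace π (N.map f₁)
  have hK := fixedSubspace_invariant π (N.map f₁)
  have : CompleteSpace K := (isClosed_fixedSubspace π _).completeSpace_coe
  have hF₁ : ∀ g ∈ F, ‖π (f₁ g) ξ - ξ‖ < δ / 2 := fun g hg =>
    hF _ (Finset.mem_union_left _ (Finset.mem_image_of_mem f₁ hg))
  have hF₂ : ∀ g ∈ F, ‖π (f₂ g) ξ - ξ‖ < δ / 2 := fun g hg =>
    hF _ (Finset.mem_union_right _ (Finset.mem_image_of_mem f₂ hg))
  have hKperp : ‖Kᗮ.starProjection ξ‖ < 1 / 2 := by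
    by_contra! h
    obtain ⟨ζ, hζKperp, hζ, hζK⟩ := hT.exists_mem_fixedSubspace_of_starProjection f₁ π
      (orthogonal_invariant π hK) hF₁ h
    exact hζ ((Submodule.mem_bot ℂ).1 (K.inf_orthogonal_eq_bot ▸ ⟨hζK, hζKperp⟩))
  have hKξ : 1 / 2 ≤ ‖K.starProjection ξ‖ := by
    have := norm_add_le (K.starProjection ξ) (Kᗮ.starProjection ξ)
    rw [K.starProjection_add_starProjection_orthogonal, hξ] at this
    linarith
  obtain ⟨ζ, hζK, hζ, hζfix⟩ := hT.exists_mem_fixedSubspace_of_starProjection f₂ π hK hF₂ hKξ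
  exact ⟨ζ, hζ, mem_fixedSubspace.1 ((fixedSubspace_sup π _ _).symm ▸ ⟨hζK, hζfix⟩)⟩

end IsKazhdanPair

end KazhdanPair

namespace SemidirectProduct

variable {N Γ : Type*} [Group N] [Group Γ] {φ : Γ →* MulAut N}

theorem normal_map_inl {M : Subgroup N} [M.Normal] (hM : ∀ g, ∀ x ∈ M, φ g x ∈ M) :
    (M.map (inl : N →* N ⋊[φ] Γ)).Normal := by
  constructor
  rintro _ ⟨x, hx, rfl⟩ g
  rw [← inl_left_mul_inr_right g]
  refine ⟨g.left * φ g.right x * g.left⁻¹, ‹M.Normal›.conj_mem _ (hM _ x hx) _, ?_⟩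
  simp only [map_mul, map_inv, inl_aut, mul_inv_rev]
  group

end SemidirectProduct

section DiagonalTwist

open SemidirectProduct

variable {Γ H : Type*} [Group Γ] [Group H] {σ : Γ →* MulAut H} {β : Γ ≃* Γ}
  {σt : Γ →* MulAut (H × H)} (hσt : ∀ (g : Γ) (x y : H), σt g (x, y) = (σ g x, σ (β g) y))
include hσt

def embedFst : H ⋊[σ] Γ →* (H × H) ⋊[σt] Γ :=
  map (MonoidHom.inl H H) (MonoidHom.id Γ) fun g => by ext x <;> simp [hσt]

def embedSnd : H ⋊[σ] Γ →* (H × H) ⋊[σt] Γ :=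
  map (MonoidHom.inr H H) β.symm.toMonoidHom fun g => by ext x <;> simp [hσt]

theorem normal_map_range_inl_embedFst :
    ((inl (φ := σ)).range.map (embedFst hσt)).Normal := by
  have hrange : (inl (φ := σ)).range.map (embedFst hσt)
      = (MonoidHom.snd H H).ker.map (inl (φ := σt)) := by
    rw [MonoidHom.map_range, embedFst, map_comp_inl, ← MonoidHom.map_range]
    congr 1
    ext ⟨a, b⟩
    simp [Prod.ext_iff, eq_comm, Subgroup.mem_prod]
  rw [hrange]
  refine normal_map_inl ?_
  rintro g ⟨x, y⟩ (rfl : y = 1)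
  simp [hσt, Subgroup.mem_prod]

theorem range_inl_le_sup_embed :
    (inl (φ := σt)).range ≤
      (inl (φ := σ)).range.map (embedFst hσt) ⊔ (inl (φ := σ)).range.map (embedSnd hσt) := by
  rintro _ ⟨⟨x, y⟩, rfl⟩
  have : (inl ((x, y) : H × H) : (H × H) ⋊[σt] Γ) =
      embedFst hσt (inl x) * embedSnd hσt (inl y) := by
    simp [embedFst, embedSnd, ← map_mul]
  rw [this]
  exact Subgroup.mul_mem _ (Subgroup.mem_sup_left ⟨_, ⟨x, rfl⟩, rfl⟩)
    (Subgroup.mem_sup_right ⟨_, ⟨y, rfl⟩, rfl⟩)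

end DiagonalTwist

/-- If `(H ⋊_σ Γ, H)` has relative property (T) and `β ∈ Aut(Γ)`, then for the
diagonal action `σ̃(g) = σ(g) × σ(β(g))` of `Γ` on `H × H`, the pair
`((H × H) ⋊_{σ̃} Γ, H × H)` has relative property (T). -/
theorem relT_diag_twist (Γ H : Type*) [Group Γ] [Group H]
    (σ : Γ →* MulAut H) (β : Γ ≃* Γ)
    (σt : Γ →* MulAut (H × H))
    (hσt : ∀ (g : Γ) (x y : H), σt g (x, y) = (σ g x, σ (β g) y))
    (h : RelPropertyT (H ⋊[σ] Γ) (SemidirectProduct.inl (φ := σ)).range) :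
    RelPropertyT ((H × H) ⋊[σt] Γ) (SemidirectProduct.inl (φ := σt)).range := by
  classical
  obtain ⟨F, δ, hδ, hT : IsKazhdanPair _ F δ⟩ := h
  have := normal_map_range_inl_embedFst hσt
  exact ⟨_, δ / 2, half_pos hδ,
    (hT.map_sup_map _ (embedSnd hσt)).mono (range_inl_le_sup_embed hσt)⟩
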